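/- Let V be a finite-dimensional real vector space equipped with data (γ, ℓ, ℓ⁽²⁾, P, n, n⁽²⁾) satisfying the four contraction identities, and assume n⁽²⁾ = 0. Then n ≠ 0 and the radical of γ equals the line spanned by n: Rad γ = span{n}. In particular γ(n,·) = 0 and ℓ(n) = 1. -/

import Mathlib

open Module

/-- The vector of `V` corresponding to `P(ρ,·) ∈ V**`, via the canonical
identification `V ≅ V**`. -/
noncomputable def Pvec {V : Type*} [AddCommGroup V] [Module ℝ V] [FiniteDimensional ℝ V]
    (P : LinearMap.BilinForm ℝ (Module.Dual ℝ V)) (ρ : Module.Dual ℝ V) : V :=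
  (Module.evalEquiv ℝ V).symm (P ρ)

section

variable {V : Type*} [AddCommGroup V] [Module ℝ V] [FiniteDimensional ℝ V]

@[simp]
theorem Pvec_zero (P : LinearMap.BilinForm ℝ (Module.Dual ℝ V)) : Pvec P 0 = 0 := by
  simp [Pvec]

theorem ker_le_span_singleton_of_contraction (γ : LinearMap.BilinForm ℝ V)
    (ℓ : Module.Dual ℝ V) (P : LinearMap.BilinForm ℝ (Module.Dual ℝ V)) (n : V)
    (h4 : ∀ X : V, Pvec P (γ X) + ℓ X • n = X) :
    LinearMap.ker γ ≤ Submodule.span ℝ {n} := by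
  intro X hX
  have hX' : ℓ X • n = X := by
    simpa [LinearMap.mem_ker.1 hX] using h4 X
  exact hX' ▸ Submodule.smul_mem _ _ (Submodule.mem_span_singleton_self n)

end

theorem radical_eq_span_n_general {V : Type*} [AddCommGroup V] [Module ℝ V]
    [FiniteDimensional ℝ V]
    (γ : LinearMap.BilinForm ℝ V)
    (ℓ : Module.Dual ℝ V) (ℓ2 : ℝ)
    (P : LinearMap.BilinForm ℝ (Module.Dual ℝ V))
    (n : V) (n2 : ℝ) (hn2 : n2 = 0)
    (h1 : γ n + n2 • ℓ = 0)
    (h2 : ℓ n + n2 * ℓ2 = 1)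
    (h4 : ∀ X : V, Pvec P (γ X) + ℓ X • n = X) :
    n ≠ 0 ∧ LinearMap.ker γ = Submodule.span ℝ {n} ∧ γ n = 0 ∧ ℓ n = 1 := by
  subst hn2
  have hγn : γ n = 0 := by simpa using h1
  have hℓn : ℓ n = 1 := by simpa using h2
  refine ⟨?_, le_antisymm (ker_le_span_singleton_of_contraction γ ℓ P n h4)
    ((Submodule.span_singleton_le_iff_mem n _).2 hγn), hγn, hℓn⟩
  rintro rfl
  simp at hℓn

/-- For hypersurface data with `n⁽²⁾ = 0`: `n ≠ 0`, the radical of `γ` is the line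
spanned by `n`, `γ(n,·) = 0` and `ℓ(n) = 1`. -/
theorem radical_eq_span_n {V : Type*} [AddCommGroup V] [Module ℝ V]
    [FiniteDimensional ℝ V]
    (γ : LinearMap.BilinForm ℝ V) (hγsym : ∀ X Y : V, γ X Y = γ Y X)
    (ℓ : Module.Dual ℝ V) (ℓ2 : ℝ)
    (P : LinearMap.BilinForm ℝ (Module.Dual ℝ V)) (hPsym : ∀ α β, P α β = P β α)
    (n : V) (n2 : ℝ) (hn2 : n2 = 0)
    (h1 : γ n + n2 • ℓ = 0)
    (h2 : ℓ n + n2 * ℓ2 = 1)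
    (h3 : Pvec P ℓ + ℓ2 • n = 0)
    (h4 : ∀ X : V, Pvec P (γ X) + ℓ X • n = X) :
    n ≠ 0 ∧ LinearMap.ker γ = Submodule.span ℝ {n} ∧ γ n = 0 ∧ ℓ n = 1 :=
  radical_eq_span_n_general γ ℓ ℓ2 P n n2 hn2 h1 h2 h4
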